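/- Let X be a set of boolean variables, 𝒞 a collection of clauses over X, c ∈ 𝒞 a clause containing the positive literal x. Let h ∉ X be a new variable, and let 𝒞' be obtained from 𝒞 by replacing the literal x in c by the positive literal h and adding the new clause {x, ¬h}. Then 𝒞 is satisfiable if and only if 𝒞' is satisfiable (as a collection of clauses over X ∪ {h}). -/

import Mathlib

/-- A literal is a pair (variable, polarity); a truth assignment t satisfies a clause
(a finite set of literals) if some literal (x, b) in it has t x = b. -/
def SatisfiesClause {V : Type*} (t : V → Bool) (c : Finset (V × Bool)) : Prop :=
  ∃ l ∈ c, t l.1 = l.2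

/-! A satisfying assignment of `𝒞` extends to the new clauses by giving `h` the value of `x`.
Conversely, the clause `{x, ¬h}` says that `h` implies `x`, so any assignment satisfying the
split clause `(c \ {x}) ∪ {h}` together with `{x, ¬h}` satisfies `c`. -/

section SatisfiesClause

variable {V : Type*} {t t' : V → Bool} {c : Finset (V × Bool)} {l : V × Bool}

theorem SatisfiesClause.congr (htt' : ∀ l ∈ c, t l.1 = t' l.1) :
    SatisfiesClause t c ↔ SatisfiesClause t' c := by
  unfold SatisfiesClause
  exact exists_congr fun l => and_congr_right fun hl => by rw [htt' l hl]

theorem satisfiesClause_singleton : SatisfiesClause t {l} ↔ t l.1 = l.2 := by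
  simp [SatisfiesClause]

variable [DecidableEq V]

theorem satisfiesClause_insert :
    SatisfiesClause t (insert l c) ↔ t l.1 = l.2 ∨ SatisfiesClause t c := by
  simp [SatisfiesClause]

theorem satisfiesClause_iff_of_mem (hl : l ∈ c) :
    SatisfiesClause t c ↔ t l.1 = l.2 ∨ SatisfiesClause t (c.erase l) := by
  rw [← satisfiesClause_insert, Finset.insert_erase hl]

theorem satisfiesClause_update_of_forall_notMem {h : V} (hfresh : ∀ b, (h, b) ∉ c) (v : Bool) :
    SatisfiesClause (Function.update t h v) c ↔ SatisfiesClause t c :=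
  SatisfiesClause.congr fun l hl =>
    Function.update_of_ne (fun hlh => hfresh l.2 (by rwa [← hlh])) v t

end SatisfiesClause

theorem split_variable_satisfiable_general {V : Type*} [DecidableEq V]
    (𝒞 : Set (Finset (V × Bool))) (c : Finset (V × Bool)) (hc : c ∈ 𝒞)
    (x h : V) (hx : (x, true) ∈ c)
    (hfresh : ∀ d ∈ 𝒞, ∀ b : Bool, (h, b) ∉ d) :
    (∃ t : V → Bool, ∀ d ∈ 𝒞, SatisfiesClause t d) ↔
      (∃ t : V → Bool, ∀ d ∈
          insert ({(x, true), (h, false)} : Finset (V × Bool))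
            (insert (insert (h, true) (c.erase (x, true))) (𝒞 \ {c})),
        SatisfiesClause t d) := by
  simp only [Set.forall_mem_insert, Set.mem_sdiff, Set.mem_singleton_iff, satisfiesClause_insert,
    satisfiesClause_singleton]
  constructor
  · rintro ⟨t, ht⟩
    have hxh : x ≠ h := by rintro rfl; exact hfresh c hc true hx
    refine ⟨Function.update t h (t x), by simp [hxh], ?_, fun d ⟨hd, _⟩ =>
      (satisfiesClause_update_of_forall_notMem (hfresh d hd) _).2 (ht d hd)⟩
    rw [Function.update_self, satisfiesClause_update_of_forall_notMem
      (fun b hb => hfresh c hc b (Finset.mem_of_mem_erase hb))]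
    exact (satisfiesClause_iff_of_mem hx).1 (ht c hc)
  · rintro ⟨t, hpair, hsplit, hrest⟩
    refine ⟨t, fun d hd => ?_⟩
    obtain rfl | hdc := eq_or_ne d c
    · rw [satisfiesClause_iff_of_mem hx]
      cases hth : t h <;> simp_all
    · exact hrest d ⟨hd, hdc⟩

/-- Splitting a variable: replacing the positive literal x in a clause c by a fresh
variable h and adding the clause {x, ¬h} preserves satisfiability. -/
theorem split_variable_satisfiable {V : Type*} [DecidableEq V]
    (𝒞 : Set (Finset (V × Bool))) (c : Finset (V × Bool)) (hc : c ∈ 𝒞)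
    (x h : V) (hx : (x, true) ∈ c) (hxh : h ≠ x)
    (hfresh : ∀ d ∈ 𝒞, ∀ b : Bool, (h, b) ∉ d) :
    (∃ t : V → Bool, ∀ d ∈ 𝒞, SatisfiesClause t d) ↔
      (∃ t : V → Bool, ∀ d ∈
          insert ({(x, true), (h, false)} : Finset (V × Bool))
            (insert (insert (h, true) (c.erase (x, true))) (𝒞 \ {c})),
        SatisfiesClause t d) :=
  split_variable_satisfiable_general 𝒞 c hc x h hx hfresh
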